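/- For |q| < 1, one has ∑_{n≥0} q^{3·binom(n,2)+2n} (q^4;q^6)_n / (q;q)_{3n+1} = 1 / ((q^2;q^3)_∞ (q;q^6)_∞). -/

import Mathlib

/-!
Split `(q;q)_{3n+1}` by residues mod 3 and use `(q⁴;q⁶)_n = (q²;q³)_n (-q²;q³)_n`: the `n`-th
summand times `(q;q³)_∞` is then the `n`-th term of the `₁φ₁`-type summation
`∑ₙ (a;Q)ₙ (-1)ⁿ Q^C(n,2) uⁿ / (Q;Q)ₙ · (auQⁿ;Q)_∞ = (u;Q)_∞` at `Q = q³`, `a = u = -q²`.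
That summation comes from expanding `(auQⁿ;Q)_∞` by Euler's series
`(t;Q)_∞ = ∑ₘ (-1)ᵐ Q^C(m,2) tᵐ / (Q;Q)ₘ`, regrouping the absolutely convergent double series along
antidiagonals, and the finite identity `∑_{n+m=N} (a;Q)ₙ aᵐ / ((Q;Q)ₙ (Q;Q)ₘ) = 1 / (Q;Q)_N`
(the coefficient of `z^N` in `(az;Q)_∞/(z;Q)_∞ · 1/(az;Q)_∞`). So the series equals
`(-q²;q³)_∞ / (q;q³)_∞`, and `(q;q³)_∞ = (q;q⁶)_∞ (q⁴;q⁶)_∞ = (q;q⁶)_∞ (q²;q³)_∞ (-q²;q³)_∞`.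
-/

open Finset

noncomputable def qPoch (a q : ℂ) (n : ℕ) : ℂ := ∏ k ∈ Finset.range n, (1 - a * q ^ k)

noncomputable def qPochInf (a q : ℂ) : ℂ := ∏' k : ℕ, (1 - a * q ^ k)

open Filter Topology

section Finite

variable (a Q : ℂ)

@[simp] lemma qPoch_zero : qPoch a Q 0 = 1 := by simp [qPoch]

lemma qPoch_succ (n : ℕ) : qPoch a Q (n + 1) = qPoch a Q n * (1 - a * Q ^ n) :=
  prod_range_succ _ _

lemma qPoch_mul_qPoch_neg (n : ℕ) :
    qPoch a Q n * qPoch (-a) Q n = qPoch (a ^ 2) (Q ^ 2) n := by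
  simp only [qPoch, ← prod_mul_distrib]
  exact prod_congr rfl fun k _ => by ring

lemma qPoch_three_mul (n : ℕ) :
    qPoch a Q (3 * n) =
      qPoch a (Q ^ 3) n * qPoch (a * Q) (Q ^ 3) n * qPoch (a * Q ^ 2) (Q ^ 3) n := by
  induction n with
  | zero => simp
  | succ n ih =>
    rw [show 3 * (n + 1) = 3 * n + 1 + 1 + 1 by ring, qPoch_succ, qPoch_succ, qPoch_succ, ih,
      qPoch_succ, qPoch_succ, qPoch_succ]
    ring

end Finite

section Norms

variable {a Q : ℂ}

lemma norm_mul_pow_le (hQ : ‖Q‖ ≤ 1) (k : ℕ) : ‖a * Q ^ k‖ ≤ ‖a‖ := by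
  rw [norm_mul, norm_pow]
  exact mul_le_of_le_one_right (norm_nonneg a) (pow_le_one₀ (norm_nonneg Q) hQ)

lemma one_sub_mul_pow_ne_zero (ha : ‖a‖ < 1) (hQ : ‖Q‖ ≤ 1) (k : ℕ) :
    1 - a * Q ^ k ≠ 0 :=
  sub_ne_zero.mpr fun h => ((norm_mul_pow_le hQ k).trans_lt ha).ne (by rw [← h, norm_one])

lemma qPoch_ne_zero (ha : ‖a‖ < 1) (hQ : ‖Q‖ ≤ 1) (n : ℕ) : qPoch a Q n ≠ 0 :=
  prod_ne_zero_iff.mpr fun k _ => one_sub_mul_pow_ne_zero ha hQ k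

lemma norm_qPoch_le (hQ : ‖Q‖ ≤ 1) (n : ℕ) : ‖qPoch a Q n‖ ≤ (1 + ‖a‖) ^ n := by
  calc ‖qPoch a Q n‖ ≤ ∏ k ∈ range n, ‖1 - a * Q ^ k‖ := norm_prod_le _ _
    _ ≤ ∏ _k ∈ range n, (1 + ‖a‖) := by
      gcongr with k
      exact (norm_sub_le _ _).trans (by rw [norm_one]; gcongr; exact norm_mul_pow_le hQ k)
    _ = (1 + ‖a‖) ^ n := by simp

lemma pow_le_norm_qPoch (ha : ‖a‖ ≤ 1) (hQ : ‖Q‖ ≤ 1) (n : ℕ) :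
    (1 - ‖a‖) ^ n ≤ ‖qPoch a Q n‖ := by
  calc (1 - ‖a‖) ^ n = ∏ _k ∈ range n, (1 - ‖a‖) := by simp
    _ ≤ ∏ k ∈ range n, ‖1 - a * Q ^ k‖ := by
      gcongr with k
      exact (sub_le_sub_left (norm_mul_pow_le hQ k) 1).trans
        (by simpa using norm_sub_norm_le 1 (a * Q ^ k))
    _ = ‖qPoch a Q n‖ := (norm_prod _ _).symm

end Norms

section Infinite

variable {Q : ℂ}

lemma multipliable_qPochInf (a : ℂ) (hQ : ‖Q‖ < 1) :
    Multipliable fun k : ℕ => 1 - a * Q ^ k := by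
  simpa only [sub_eq_add_neg] using Complex.multipliable_one_add_of_summable
    ((summable_geometric_of_norm_lt_one hQ).mul_left a).neg

lemma qPochInf_ne_zero {a : ℂ} (ha : ‖a‖ < 1) (hQ : ‖Q‖ < 1) : qPochInf a Q ≠ 0 := by
  have hsum : Summable fun k : ℕ => ‖-(a * Q ^ k)‖ := by
    simpa only [norm_neg] using ((summable_geometric_of_norm_lt_one hQ).mul_left a).norm
  simpa only [qPochInf, sub_eq_add_neg] using tprod_one_add_ne_zero_of_summable
    (fun k => by simpa only [← sub_eq_add_neg] using one_sub_mul_pow_ne_zero ha hQ.le k) hsum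

lemma tendsto_qPoch (a : ℂ) (hQ : ‖Q‖ < 1) :
    Tendsto (qPoch a Q) atTop (𝓝 (qPochInf a Q)) :=
  (multipliable_qPochInf a hQ).hasProd.tendsto_prod_nat

lemma qPochInf_eq_qPoch_mul (a : ℂ) (hQ : ‖Q‖ < 1) (n : ℕ) :
    qPochInf a Q = qPoch a Q n * qPochInf (a * Q ^ n) Q := by
  have hshift : Multipliable fun k => 1 - a * Q ^ (k + n) :=
    (multipliable_qPochInf (a * Q ^ n) hQ).congr fun k => by ring
  calc qPochInf a Q = (∏ k ∈ range n, (1 - a * Q ^ k)) * ∏' k, (1 - a * Q ^ (k + n)) :=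
        (Multipliable.prod_mul_tprod_nat_mul' (f := fun k => 1 - a * Q ^ k) hshift).symm
    _ = qPoch a Q n * qPochInf (a * Q ^ n) Q :=
        congrArg (qPoch a Q n * ·) (tprod_congr fun k => by ring)

lemma qPochInf_mul_qPochInf_neg (a : ℂ) (hQ : ‖Q‖ < 1) :
    qPochInf a Q * qPochInf (-a) Q = qPochInf (a ^ 2) (Q ^ 2) := by
  rw [qPochInf, qPochInf, qPochInf,
    ← (multipliable_qPochInf a hQ).tprod_mul (multipliable_qPochInf (-a) hQ)]
  exact tprod_congr fun k => by ring

lemma qPochInf_sq_mul_qPochInf_sq (a : ℂ) (hQ : ‖Q‖ < 1) :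
    qPochInf a (Q ^ 2) * qPochInf (a * Q) (Q ^ 2) = qPochInf a Q := by
  have hQ2 : ‖Q ^ 2‖ < 1 := by
    rw [norm_pow]; exact pow_lt_one₀ (norm_nonneg Q) hQ two_ne_zero
  have heven := multipliable_qPochInf a hQ2
  have hodd := multipliable_qPochInf (a * Q) hQ2
  rw [qPochInf, qPochInf, qPochInf, ← tprod_even_mul_odd (f := fun k => 1 - a * Q ^ k)
    (heven.congr fun k => by ring) (hodd.congr fun k => by ring)]
  congr 1 <;> exact tprod_congr fun k => by ring

end Infinite

lemma Nat.choose_two_succ (n : ℕ) : (n + 1).choose 2 = n.choose 2 + n := by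
  simp [Nat.choose_succ_succ', add_comm]

lemma Nat.choose_two_add (m n : ℕ) : (m + n).choose 2 = m.choose 2 + n.choose 2 + m * n := by
  induction n with
  | zero => simp
  | succ n ih => rw [← add_assoc, Nat.choose_two_succ, ih, Nat.choose_two_succ]; ring

lemma summable_pow_mul_pow_choose_two {ρ : ℝ} (hρ₀ : 0 ≤ ρ) (hρ : ρ < 1) (r : ℝ) :
    Summable fun n : ℕ => r ^ n * ρ ^ n.choose 2 := by
  refine summable_of_ratio_norm_eventually_le one_half_lt_one ?_
  have hlim : Tendsto (fun n : ℕ => ‖r‖ * ρ ^ n) atTop (𝓝 0) := by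
    simpa using (tendsto_pow_atTop_nhds_zero_of_lt_one hρ₀ hρ).const_mul ‖r‖
  filter_upwards [hlim.eventually_le_const one_half_pos] with n hn
  calc ‖r ^ (n + 1) * ρ ^ (n + 1).choose 2‖
        = ‖r‖ * ρ ^ n * ‖r ^ n * ρ ^ n.choose 2‖ := by
        simp only [Nat.choose_two_succ, norm_mul, norm_pow, Real.norm_of_nonneg hρ₀]; ring
    _ ≤ 1 / 2 * ‖r ^ n * ρ ^ n.choose 2‖ := by gcongr

noncomputable def eulerTerm (Q t : ℂ) (m : ℕ) : ℂ :=
  (-1) ^ m * Q ^ m.choose 2 * t ^ m / qPoch Q Q m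

section Euler

variable {Q : ℂ}

lemma norm_eulerTerm_le (hQ : ‖Q‖ < 1) {t : ℂ} {R : ℝ} (ht : ‖t‖ ≤ R) (m : ℕ) :
    ‖eulerTerm Q t m‖ ≤ (R / (1 - ‖Q‖)) ^ m * ‖Q‖ ^ m.choose 2 := by
  have hR : 0 ≤ R := (norm_nonneg t).trans ht
  have hden : 0 < (1 - ‖Q‖) ^ m := pow_pos (sub_pos.mpr hQ) m
  calc ‖eulerTerm Q t m‖ = ‖Q‖ ^ m.choose 2 * ‖t‖ ^ m / ‖qPoch Q Q m‖ := by
        simp [eulerTerm, norm_pow]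
    _ ≤ ‖Q‖ ^ m.choose 2 * R ^ m / (1 - ‖Q‖) ^ m := by
        gcongr
        exact pow_le_norm_qPoch hQ.le hQ.le m
    _ = (R / (1 - ‖Q‖)) ^ m * ‖Q‖ ^ m.choose 2 := by rw [div_pow]; ring

lemma summable_eulerTerm (hQ : ‖Q‖ < 1) (t : ℂ) : Summable (eulerTerm Q t) :=
  .of_norm_bounded (summable_pow_mul_pow_choose_two (norm_nonneg Q) hQ _)
    (norm_eulerTerm_le hQ le_rfl)

lemma eulerTerm_succ_sub (hQ : ‖Q‖ < 1) (t : ℂ) (m : ℕ) :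
    eulerTerm Q t (m + 1) - eulerTerm Q (t * Q) (m + 1) = -t * eulerTerm Q (t * Q) m := by
  have h₁ := qPoch_ne_zero hQ hQ.le m
  have h₂ := one_sub_mul_pow_ne_zero hQ hQ.le m
  simp only [eulerTerm, qPoch_succ, Nat.choose_two_succ]
  field_simp
  ring

lemma tsum_eulerTerm_eq_mul (hQ : ‖Q‖ < 1) (t : ℂ) :
    ∑' m, eulerTerm Q t m = (1 - t) * ∑' m, eulerTerm Q (t * Q) m := by
  have hdiff := (summable_eulerTerm hQ t).sub (summable_eulerTerm hQ (t * Q))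
  have h := hdiff.tsum_eq_zero_add
  simp only [eulerTerm_succ_sub hQ, tsum_mul_left] at h
  rw [(summable_eulerTerm hQ t).tsum_sub (summable_eulerTerm hQ (t * Q))] at h
  rw [show eulerTerm Q t 0 - eulerTerm Q (t * Q) 0 = 0 by simp [eulerTerm], zero_add] at h
  linear_combination h

lemma tsum_eulerTerm_eq_qPoch_mul (hQ : ‖Q‖ < 1) (t : ℂ) (n : ℕ) :
    ∑' m, eulerTerm Q t m = qPoch t Q n * ∑' m, eulerTerm Q (t * Q ^ n) m := by
  induction n with
  | zero => simp
  | succ n ih =>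
    rw [ih, tsum_eulerTerm_eq_mul hQ, qPoch_succ, pow_succ, ← mul_assoc t, mul_assoc (qPoch t Q n)]

lemma tendsto_tsum_eulerTerm_mul_pow (hQ : ‖Q‖ < 1) (t : ℂ) :
    Tendsto (fun n => ∑' m, eulerTerm Q (t * Q ^ n) m) atTop (𝓝 1) := by
  have hlim : Tendsto (fun n => t * Q ^ n) atTop (𝓝 0) := by
    simpa using (tendsto_pow_atTop_nhds_zero_of_norm_lt_one hQ).const_mul t
  have hone : ∑' m, eulerTerm Q 0 m = 1 := by
    rw [tsum_eq_single 0 fun m hm => by simp [eulerTerm, hm]]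
    simp [eulerTerm]
  rw [← hone]
  refine tendsto_tsum_of_dominated_convergence
    (summable_pow_mul_pow_choose_two (norm_nonneg Q) hQ (‖t‖ / (1 - ‖Q‖))) (fun m => ?_)
    (.of_forall fun n => norm_eulerTerm_le hQ (norm_mul_pow_le hQ.le n))
  have hcont : Continuous fun t => eulerTerm Q t m := by unfold eulerTerm; fun_prop
  exact hcont.continuousAt.tendsto.comp hlim

theorem tsum_eulerTerm (hQ : ‖Q‖ < 1) (t : ℂ) : ∑' m, eulerTerm Q t m = qPochInf t Q := by
  have h := (tendsto_qPoch t hQ).mul (tendsto_tsum_eulerTerm_mul_pow hQ t)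
  rw [mul_one] at h
  exact tendsto_nhds_unique (tendsto_const_nhds.congr (tsum_eulerTerm_eq_qPoch_mul hQ t)) h

end Euler

lemma Summable.tsum_eq_tsum_sum_antidiagonal {A M : Type*}
    [AddCommMonoid A] [HasAntidiagonal A]
    [AddCommMonoid M] [TopologicalSpace M] [ContinuousAdd M] [T3Space M] {f : A × A → M}
    (hf : Summable f) : ∑' p, f p = ∑' n, ∑ p ∈ antidiagonal n, f p := by
  let e := HasAntidiagonal.sigmaAntidiagonalEquivProd (A := A)
  have he : Summable fun c => f (e c) := e.summable_iff.mpr hf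
  rw [← e.tsum_eq f, he.tsum_sigma' fun n => (hasSum_fintype _).summable]
  exact tsum_congr fun n => by rw [tsum_fintype]; exact sum_finset_coe (fun p => f p) _

section QBinomial

variable {Q : ℂ} (a : ℂ)

lemma one_sub_pow_mul_sum_antidiagonal_succ (hQ : ‖Q‖ < 1) (N : ℕ) :
    (1 - Q ^ (N + 1)) * ∑ p ∈ antidiagonal (N + 1),
        qPoch a Q p.1 / qPoch Q Q p.1 * (a ^ p.2 / qPoch Q Q p.2) =
      ∑ p ∈ antidiagonal N, qPoch a Q p.1 / qPoch Q Q p.1 * (a ^ p.2 / qPoch Q Q p.2) := by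
  set α : ℕ → ℂ := fun n => qPoch a Q n / qPoch Q Q n
  set β : ℕ → ℂ := fun m => a ^ m / qPoch Q Q m
  have hα (n : ℕ) : (1 - Q ^ (n + 1)) * α (n + 1) = (1 - a * Q ^ n) * α n := by
    have := qPoch_ne_zero hQ hQ.le n
    have := one_sub_mul_pow_ne_zero hQ hQ.le n
    simp only [α, qPoch_succ, pow_succ']
    field_simp
  have hβ (m : ℕ) : (1 - Q ^ (m + 1)) * β (m + 1) = a * β m := by
    have := qPoch_ne_zero hQ hQ.le m
    have := one_sub_mul_pow_ne_zero hQ hQ.le m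
    simp only [β, qPoch_succ, pow_succ']
    field_simp
  have hsplit : (1 - Q ^ (N + 1)) * ∑ p ∈ antidiagonal (N + 1), α p.1 * β p.2 =
      ∑ p ∈ antidiagonal (N + 1), (1 - Q ^ p.1) * α p.1 * β p.2 +
        ∑ p ∈ antidiagonal (N + 1), Q ^ p.1 * α p.1 * ((1 - Q ^ p.2) * β p.2) := by
    rw [mul_sum, ← sum_add_distrib]
    refine sum_congr rfl fun p hp => ?_
    rw [← mem_antidiagonal.mp hp, pow_add]
    ring
  rw [hsplit, Nat.sum_antidiagonal_succ, Nat.sum_antidiagonal_succ']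
  simp only [pow_zero, sub_self, zero_mul, mul_zero, zero_add, hα, hβ, ← sum_add_distrib]
  exact sum_congr rfl fun p _ => by ring

theorem sum_antidiagonal_qPoch_div_mul_pow_div (hQ : ‖Q‖ < 1) (N : ℕ) :
    ∑ p ∈ antidiagonal N, qPoch a Q p.1 / qPoch Q Q p.1 * (a ^ p.2 / qPoch Q Q p.2) =
      1 / qPoch Q Q N := by
  induction N with
  | zero => simp
  | succ N ih =>
    have h := one_sub_pow_mul_sum_antidiagonal_succ a hQ N
    have := qPoch_ne_zero hQ hQ.le N
    have := one_sub_mul_pow_ne_zero hQ hQ.le N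
    rw [ih, pow_succ'] at h
    rw [qPoch_succ]
    field_simp at h ⊢
    linear_combination h

end QBinomial

section OnePhiOne

variable {Q : ℂ} (a u : ℂ)

lemma qPoch_mul_eulerTerm_mul_eulerTerm (n m : ℕ) :
    qPoch a Q n * eulerTerm Q u n * eulerTerm Q (a * u * Q ^ n) m =
      (-1) ^ (n + m) * Q ^ (n + m).choose 2 * u ^ (n + m) *
        (qPoch a Q n / qPoch Q Q n * (a ^ m / qPoch Q Q m)) := by
  simp only [eulerTerm, Nat.choose_two_add, mul_pow, ← pow_mul]
  ring

lemma norm_qPoch_mul_eulerTerm_le (hQ : ‖Q‖ < 1) (n : ℕ) :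
    ‖qPoch a Q n * eulerTerm Q u n‖ ≤
      ((1 + ‖a‖) * (‖u‖ / (1 - ‖Q‖))) ^ n * ‖Q‖ ^ n.choose 2 := by
  rw [norm_mul, mul_pow, mul_assoc]
  gcongr
  · exact norm_qPoch_le hQ.le n
  · exact norm_eulerTerm_le hQ le_rfl n

theorem tsum_qPoch_mul_eulerTerm_mul_qPochInf (hQ : ‖Q‖ < 1) :
    ∑' n, qPoch a Q n * eulerTerm Q u n * qPochInf (a * u * Q ^ n) Q = qPochInf u Q := by
  set F : ℕ × ℕ → ℂ := fun p =>
    qPoch a Q p.1 * eulerTerm Q u p.1 * eulerTerm Q (a * u * Q ^ p.1) p.2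
  have hF : Summable F := by
    have hQ' : 0 < 1 - ‖Q‖ := sub_pos.mpr hQ
    refine .of_norm_bounded ((summable_pow_mul_pow_choose_two (norm_nonneg Q) hQ
      ((1 + ‖a‖) * (‖u‖ / (1 - ‖Q‖)))).mul_of_nonneg
      (summable_pow_mul_pow_choose_two (norm_nonneg Q) hQ (‖a * u‖ / (1 - ‖Q‖)))
      (fun n => by positivity) (fun m => by positivity)) (fun p => ?_)
    rw [norm_mul]
    gcongr
    · exact norm_qPoch_mul_eulerTerm_le a u hQ p.1
    · exact norm_eulerTerm_le hQ (norm_mul_pow_le hQ.le p.1) p.2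
  calc ∑' n, qPoch a Q n * eulerTerm Q u n * qPochInf (a * u * Q ^ n) Q
      = ∑' n, ∑' m, F (n, m) := tsum_congr fun n => by
        rw [← tsum_eulerTerm hQ, ← tsum_mul_left]
    _ = ∑' N, ∑ p ∈ antidiagonal N, F p := by
        rw [← hF.tsum_prod' hF.prod_factor, hF.tsum_eq_tsum_sum_antidiagonal]
    _ = ∑' N, eulerTerm Q u N := tsum_congr fun N => by
        rw [sum_congr rfl fun p hp => (qPoch_mul_eulerTerm_mul_eulerTerm a u p.1 p.2).trans
            (by rw [mem_antidiagonal.mp hp]),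
          ← mul_sum, sum_antidiagonal_qPoch_div_mul_pow_div a hQ, eulerTerm, mul_one_div]
    _ = qPochInf u Q := tsum_eulerTerm hQ u

end OnePhiOne

lemma summand_mul_qPochInf (q : ℂ) (hq : ‖q‖ < 1) (n : ℕ) :
    q ^ (3 * n.choose 2 + 2 * n) * qPoch (q ^ 4) (q ^ 6) n / qPoch q q (3 * n + 1) *
        qPochInf q (q ^ 3) =
      qPoch (-q ^ 2) (q ^ 3) n * eulerTerm (q ^ 3) (-q ^ 2) n *
        qPochInf (-q ^ 2 * -q ^ 2 * (q ^ 3) ^ n) (q ^ 3) := by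
  have hq3 : ‖q ^ 3‖ < 1 := by
    rw [norm_pow]; exact pow_lt_one₀ (norm_nonneg q) hq three_ne_zero
  have hnum : qPoch (q ^ 4) (q ^ 6) n =
      qPoch (q ^ 2) (q ^ 3) n * qPoch (-q ^ 2) (q ^ 3) n := by
    rw [qPoch_mul_qPoch_neg, ← pow_mul, ← pow_mul]
  have hden : qPoch q q (3 * n + 1) =
      qPoch q (q ^ 3) (n + 1) * qPoch (q ^ 2) (q ^ 3) n * qPoch (q ^ 3) (q ^ 3) n := by
    rw [qPoch_succ, qPoch_three_mul, qPoch_succ, show q * q = q ^ 2 by ring,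
      show q * q ^ 2 = q ^ 3 by ring, pow_mul]
    ring
  have hinf : qPochInf q (q ^ 3) =
      qPoch q (q ^ 3) (n + 1) * qPochInf (-q ^ 2 * -q ^ 2 * (q ^ 3) ^ n) (q ^ 3) := by
    rw [qPochInf_eq_qPoch_mul q hq3 (n + 1),
      show q * (q ^ 3) ^ (n + 1) = -q ^ 2 * -q ^ 2 * (q ^ 3) ^ n by ring]
  have hsign : (-1) ^ n * (-q ^ 2) ^ n = (q ^ 2) ^ n := by rw [← mul_pow]; ring
  have h₁ := qPoch_ne_zero hq hq3.le (n + 1)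
  have h₂ := qPoch_ne_zero (by rwa [norm_pow, sq_lt_one_iff₀ (norm_nonneg q)]) hq3.le n
  have h₃ := qPoch_ne_zero hq3 hq3.le n
  rw [hnum, hden, hinf, eulerTerm, pow_add, pow_mul, pow_mul, ← hsign]
  field_simp

theorem stmt11 (q : ℂ) (hq : ‖q‖ < 1) :
    ∑' n : ℕ, (q ^ (3 * n.choose 2 + 2 * n) * qPoch (q ^ 4) (q ^ 6) n / qPoch q q (3 * n + 1))
    = 1 / (qPochInf (q ^ 2) (q ^ 3) * qPochInf q (q ^ 6)) := by
  have hpow {k : ℕ} (hk : k ≠ 0) : ‖q ^ k‖ < 1 := by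
    rw [norm_pow]; exact pow_lt_one₀ (norm_nonneg q) hq hk
  have hsum : (∑' n : ℕ, q ^ (3 * n.choose 2 + 2 * n) * qPoch (q ^ 4) (q ^ 6) n /
      qPoch q q (3 * n + 1)) * qPochInf q (q ^ 3) = qPochInf (-q ^ 2) (q ^ 3) := by
    rw [← tsum_mul_right, tsum_congr (summand_mul_qPochInf q hq),
      tsum_qPoch_mul_eulerTerm_mul_qPochInf _ _ (hpow three_ne_zero)]
  have hprod : qPochInf q (q ^ 3) =
      qPochInf q (q ^ 6) * (qPochInf (q ^ 2) (q ^ 3) * qPochInf (-q ^ 2) (q ^ 3)) := by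
    rw [qPochInf_mul_qPochInf_neg _ (hpow three_ne_zero),
      ← qPochInf_sq_mul_qPochInf_sq q (hpow three_ne_zero), ← pow_mul, ← pow_mul, ← pow_succ']
  have h₁ := qPochInf_ne_zero (hpow two_ne_zero) (hpow three_ne_zero)
  have h₂ := qPochInf_ne_zero hq (hpow (by norm_num : 6 ≠ 0))
  have h₃ := qPochInf_ne_zero (by rw [norm_neg]; exact hpow two_ne_zero) (hpow three_ne_zero)
  rw [hprod] at hsum
  rw [eq_div_iff (mul_ne_zero h₁ h₂)]
  exact mul_right_cancel₀ h₃ (by linear_combination hsum)
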